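/- Let (f^h) ⊂ L²(S¹) and f ∈ L²(S¹; L²(𝒴 × 𝒴)). Set f̃^h = f^h ∘ Ξ, f̃(z, y, w) = f(Ξ(z), y, w) and, for φ ∈ C⁰_c(S¹; C⁰(𝒴 × 𝒴)), φ̃(z, y, w) = φ(Ξ(z), y, w)(det ∇Ξ^T(z)∇Ξ(z))^{1/2}. Then the three-scale convergence condition ∫_{S¹} f^h(x) φ(x, r(x)/ε, r(x)/ε²) dx → ∫_{S¹} ∫_𝒴 ∫_𝒴 f(x,y,w) φ(x,y,w) dw dy dx is equivalent to ∫_Ω f̃^h(z) φ̃(z, z'/ε, z'/ε²) dz → ∫_Ω ∫_𝒴 ∫_𝒴 f̃(z,y,w) φ̃(z,y,w) dw dy dz, where z' is the projection of z onto ℝ². -/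

import Mathlib

open MeasureTheory Set Filter Topology Matrix
noncomputable section

abbrev V2 : Type := Fin 2 → ℝ
abbrev V3 : Type := Fin 3 → ℝ
abbrev M3 : Type := Matrix (Fin 3) (Fin 3) ℝ

/-- An embedded compact connected oriented `C³`-surface (with boundary) in `ℝ³`,
parametrized by a single chart `ξ : ω → ℝ³`, together with its unit normal field `n`
(extended to the tubular neighbourhood so as to be constant along normal segments) and
the nearest point projection `π` onto the surface.  The curvature of the surface is
small enough that `π` is well defined on the tubular neighbourhood of half-width `1/2`
and `|I + t S(x)| ∈ (1/2, 3/2)` for all `|t| ≤ 1/2`. -/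
structure Shell where
  ω : Set V2
  hω_open : IsOpen ω
  hω_bdd : Bornology.IsBounded ω
  hω_conn : IsConnected ω
  ξ : V2 → V3
  hξ : ContDiffOn ℝ 3 ξ (closure ω)
  hξ_inj : Set.InjOn ξ (closure ω)
  hξ_imm : ∀ z ∈ ω, LinearIndependent ℝ
      ![fderiv ℝ ξ z (Pi.single 0 1), fderiv ℝ ξ z (Pi.single 1 1)]
  n : V3 → V3
  π : V3 → V3
  hn_unit : ∀ z ∈ ω, ∑ i, (n (ξ z) i) ^ 2 = 1
  hn_tangent : ∀ z ∈ ω, ∀ j : Fin 2, ∑ i, n (ξ z) i * fderiv ℝ ξ z (Pi.single j 1) i = 0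
  hn_ext : ∀ z ∈ ω, ∀ s : ℝ, |s| < 1 / 2 → n (ξ z + s • n (ξ z)) = n (ξ z)
  hπ_proj : ∀ z ∈ ω, ∀ s : ℝ, |s| < 1 / 2 → π (ξ z + s • n (ξ z)) = ξ z
  hπ_nearest : ∀ z ∈ ω, ∀ s : ℝ, |s| < 1 / 2 → ∀ z' ∈ ω,
      s ^ 2 ≤ ∑ i, (ξ z i + s * n (ξ z) i - ξ z' i) ^ 2
  hπ_smooth : ContDiffOn ℝ 2 π {p | ∃ z ∈ ω, ∃ s : ℝ, |s| < 1 / 2 ∧ p = ξ z + s • n (ξ z)}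
  hn_smooth : ContDiffOn ℝ 2 n {p | ∃ z ∈ ω, ∃ s : ℝ, |s| < 1 / 2 ∧ p = ξ z + s • n (ξ z)}
  hsmall : ∀ z ∈ ω, ∀ s : ℝ, |s| ≤ 1 / 2 →
      ‖(1 : V3 →L[ℝ] V3) + s • fderiv ℝ n (ξ z)‖ ∈ Set.Ioo (1 / 2 : ℝ) (3 / 2)

namespace Shell
variable (σ : Shell)

/-- The surface `S`. -/
def S : Set V3 := σ.ξ '' σ.ω

/-- The shell (tubular neighbourhood) `S^h` of thickness `h`. -/
def tube (h : ℝ) : Set V3 := {p | ∃ x ∈ σ.S, ∃ s : ℝ, |s| < h / 2 ∧ p = x + s • σ.n x}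

/-- The signed distance `t(x) = (x - π(x)) · n(π(x))`. -/
def t (x : V3) : ℝ := ∑ i, (x i - σ.π x i) * σ.n (σ.π x) i

/-- The orthogonal projection `T_S(x) = I - n(x) ⊗ n(x)` onto the tangent plane. -/
def Tproj (x : V3) : M3 := 1 - Matrix.vecMulVec (σ.n x) (σ.n x)

/-- The (trivially extended) Weingarten map `S(x) = S(x) T_S(x)`, precomposed with `π`:
it is the differential of the extended unit normal, evaluated at `π x`. -/
def SW (x : V3) : M3 := Matrix.of fun i j => fderiv ℝ σ.n (σ.π x) (Pi.single j 1) i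

/-- The rescaling diffeomorphism `Θ^h(x) = π(x) + (t(x)/h) n(x)`. -/
def Θ (h : ℝ) (x : V3) : V3 := σ.π x + (σ.t x / h) • σ.n x

end Shell

/-- The gradient of a map `ℝ³ → ℝ³` as a `3 × 3` matrix. -/
def gradm (u : V3 → V3) (x : V3) : M3 := Matrix.of fun i j => fderiv ℝ u x (Pi.single j 1) i

/-- The periodicity cell `Y = [0,1)²` of the torus `𝒴 = ℝ²/ℤ²`. -/
def Yc : Set V2 := {y | ∀ i, y i ∈ Set.Ico (0 : ℝ) 1}

/-- A test function in `C⁰_c(S¹, C⁰(𝒴 × 𝒴))`: jointly continuous, compactly supported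
inside `T` in the first variable, and `ℤ²`-periodic in the second and third variables. -/
structure TestFn (T : Set V3) where
  φ : V3 → V2 → V2 → ℝ
  cont : Continuous fun p : V3 × V2 × V2 => φ p.1 p.2.1 p.2.2
  supp : ∃ K : Set V3, IsCompact K ∧ K ⊆ T ∧ ∀ x ∉ K, ∀ y z, φ x y z = 0
  per_y : ∀ x y z, ∀ j : Fin 2, φ x (y + Pi.single j 1) z = φ x y z
  per_z : ∀ x y z, ∀ j : Fin 2, φ x y (z + Pi.single j 1) = φ x y z

/-- The sequence `f k` (bounded in `L²(T)`) converges weakly three-scale on `T`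
(with chart map `r` and scales `ε k`, `ε k ^ 2`) to `F ∈ L²(T; L²(𝒴 × 𝒴))`. -/
def WeakThreeScale (T : Set V3) (r : V3 → V2) (ε : ℕ → ℝ)
    (f : ℕ → V3 → ℝ) (F : V3 → V2 → V2 → ℝ) : Prop :=
  (∃ C : ℝ, ∀ k, ∫ x in T, (f k x) ^ 2 ≤ C) ∧
  ∀ Φ : TestFn T,
    Filter.Tendsto
      (fun k => ∫ x in T, f k x * Φ.φ x ((ε k)⁻¹ • r x) (((ε k) ^ 2)⁻¹ • r x))
      Filter.atTop
      (nhds (∫ x in T, ∫ y in Yc, ∫ z in Yc, F x y z * Φ.φ x y z))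

/-- Projection of a point of `Ω ⊆ ℝ³` onto its first two coordinates. -/
def proj2 (z : V3) : V2 := fun j => z j.castSucc

/-- The flattened cylinder `Ω = ω × I`. -/
def cylinder (σ : Shell) : Set V3 :=
  {z | proj2 z ∈ σ.ω ∧ z 2 ∈ Set.Ioo (-(1 / 2) : ℝ) (1 / 2)}

/-- The map `Ξ(z', z₃) = ξ(z') + z₃ n(ξ(z'))` flattening the tubular neighbourhood. -/
def Xi (σ : Shell) (z : V3) : V3 := σ.ξ (proj2 z) + z 2 • σ.n (σ.ξ (proj2 z))

/-!
`Ξ` is an injective differentiable map of the open cylinder `Ω` onto the tube `S¹`, and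
`(det ∇Ξᵀ∇Ξ)^{1/2} = |det ∇Ξ|` is its Jacobian. The change of variables `x = Ξ(z)` therefore
turns each integral over `S¹` in the first condition into the corresponding integral over `Ω`
in the second, `r(Ξ(z)) = z'` taking care of the oscillating arguments: the two sequences and
their limits agree term by term.
-/

lemma gradm_eq_toMatrix' (u : V3 → V3) (x : V3) :
    gradm u x = LinearMap.toMatrix' ((fderiv ℝ u x) : V3 →ₗ[ℝ] V3) := by
  ext i j
  rw [LinearMap.toMatrix'_apply]
  rfl

lemma sqrt_det_transpose_gradm_mul_gradm (u : V3 → V3) (x : V3) :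
    √((gradm u x)ᵀ * gradm u x).det = |(fderiv ℝ u x).det| := by
  rw [Matrix.det_mul, Matrix.det_transpose, gradm_eq_toMatrix', LinearMap.det_toMatrix',
    Real.sqrt_mul_self_eq_abs]

lemma setIntegral_image_eq_setIntegral_mul_sqrt_det {s : Set V3} (hs : IsOpen s)
    {u : V3 → V3} (hu : DifferentiableOn ℝ u s) (hinj : InjOn u s) (g : V3 → ℝ) :
    ∫ x in u '' s, g x = ∫ z in s, g (u z) * √((gradm u z)ᵀ * gradm u z).det := by
  rw [integral_image_eq_integral_abs_det_fderiv_smul volume hs.measurableSet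
    (fun z hz => ((hu.differentiableAt (hs.mem_nhds hz)).hasFDerivAt).hasFDerivWithinAt) hinj g]
  simp only [smul_eq_mul, sqrt_det_transpose_gradm_mul_gradm, mul_comm]

lemma continuous_proj2 : Continuous proj2 :=
  continuous_pi fun _ => continuous_apply _

lemma differentiable_proj2 : Differentiable ℝ proj2 := fun _ =>
  differentiableAt_pi.2 fun _ => differentiableAt_apply _ _

namespace Shell

variable (σ : Shell)

lemma isOpen_cylinder : IsOpen (cylinder σ) :=
  (σ.hω_open.preimage continuous_proj2).inter (isOpen_Ioo.preimage (continuous_apply 2))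

lemma differentiableOn_ξ : DifferentiableOn ℝ σ.ξ σ.ω := fun z hz =>
  ((σ.hξ.contDiffAt (mem_of_superset (σ.hω_open.mem_nhds hz) subset_closure)).differentiableAt
    (by norm_num)).differentiableWithinAt

lemma differentiableOn_Xi : DifferentiableOn ℝ (Xi σ) (cylinder σ) := by
  have hξ : DifferentiableOn ℝ (fun z => σ.ξ (proj2 z)) (cylinder σ) :=
    σ.differentiableOn_ξ.comp differentiable_proj2.differentiableOn fun z hz => hz.1
  have hn : DifferentiableOn ℝ (fun z => σ.n (σ.ξ (proj2 z))) (cylinder σ) :=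
    (σ.hn_smooth.differentiableOn (by norm_num)).comp hξ
      fun z hz => ⟨proj2 z, hz.1, 0, by norm_num, by simp⟩
  exact hξ.add ((differentiable_apply 2).differentiableOn.smul hn)

lemma setIntegral_tube_eq_setIntegral_cylinder
    (hΞ : BijOn (Xi σ) (cylinder σ) (σ.tube 1)) (g : V3 → ℝ) :
    ∫ x in σ.tube 1, g x
      = ∫ z in cylinder σ, g (Xi σ z) * √((gradm (Xi σ) z)ᵀ * gradm (Xi σ) z).det := by
  rw [← hΞ.image_eq]
  exact setIntegral_image_eq_setIntegral_mul_sqrt_det σ.isOpen_cylinder σ.differentiableOn_Xi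
    hΞ.injOn g

end Shell

theorem stmt_7_general (σ : Shell) (r : V3 → V2)
    (hrΞ : ∀ z ∈ cylinder σ, r (Xi σ z) = proj2 z)
    (hΞ_bij : Set.BijOn (Xi σ) (cylinder σ) (σ.tube 1))
    (h : ℕ → ℝ)
    (ε : ℝ → ℝ)
    (f : ℕ → V3 → ℝ)
    (F : V3 → V2 → V2 → ℝ)
    (Φ : TestFn (σ.tube 1)) :
    Filter.Tendsto
      (fun k => ∫ x in σ.tube 1,
        f k x * Φ.φ x ((ε (h k))⁻¹ • r x) (((ε (h k)) ^ 2)⁻¹ • r x))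
      Filter.atTop
      (nhds (∫ x in σ.tube 1, ∫ y in Yc, ∫ w in Yc, F x y w * Φ.φ x y w)) ↔
    Filter.Tendsto
      (fun k => ∫ z in cylinder σ,
        (f k (Xi σ z)) *
          (Φ.φ (Xi σ z) ((ε (h k))⁻¹ • proj2 z) (((ε (h k)) ^ 2)⁻¹ • proj2 z) *
            Real.sqrt (((gradm (Xi σ) z)ᵀ * gradm (Xi σ) z).det)))
      Filter.atTop
      (nhds (∫ z in cylinder σ, ∫ y in Yc, ∫ w in Yc,
        F (Xi σ z) y w *
          (Φ.φ (Xi σ z) y w * Real.sqrt (((gradm (Xi σ) z)ᵀ * gradm (Xi σ) z).det)))) := by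
  refine Iff.of_eq (congrArg₂ (fun a b => Tendsto a atTop (𝓝 b)) (funext fun k => ?_) ?_)
  · rw [σ.setIntegral_tube_eq_setIntegral_cylinder hΞ_bij]
    refine setIntegral_congr_fun σ.isOpen_cylinder.measurableSet fun z hz => ?_
    rw [hrΞ z hz, mul_assoc]
  · rw [σ.setIntegral_tube_eq_setIntegral_cylinder hΞ_bij]
    simp only [← mul_assoc, integral_mul_const]

/-- With `f̃ʰ = fʰ ∘ Ξ`, `F̃(z,y,w) = F(Ξ(z),y,w)` and
`φ̃(z,y,w) = φ(Ξ(z),y,w) (det ∇Ξᵀ(z)∇Ξ(z))^{1/2}`, the three-scale convergence condition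
on `S¹` is equivalent, via the change of variables `Ξ`, to the corresponding three-scale
convergence condition on the flat cylinder `Ω`, where `z'` is the projection of `z`
onto `ℝ²`. -/
theorem stmt_7 (σ : Shell) (r : V3 → V2)
    (hr : ∀ x ∈ σ.tube 1, r x ∈ σ.ω ∧ σ.ξ (r x) = σ.π x)
    (hrΞ : ∀ z ∈ cylinder σ, r (Xi σ z) = proj2 z)
    (hΞ_bij : Set.BijOn (Xi σ) (cylinder σ) (σ.tube 1))
    (h : ℕ → ℝ) (hh : ∀ k, h k ∈ Set.Ioo (0 : ℝ) 1)
    (hh0 : Filter.Tendsto h Filter.atTop (nhds 0))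
    (ε : ℝ → ℝ) (hε : ∀ s ∈ Set.Ioo (0 : ℝ) 1, ε s ∈ Set.Ioo (0 : ℝ) 1)
    (f : ℕ → V3 → ℝ) (hf : ∀ k, MemLp (f k) 2 (volume.restrict (σ.tube 1)))
    (hfbd : ∃ C : ℝ, ∀ k, ∫ x in σ.tube 1, (f k x) ^ 2 ≤ C)
    (F : V3 → V2 → V2 → ℝ)
    (hF : MemLp (fun p : V3 × V2 × V2 => F p.1 p.2.1 p.2.2) 2
      ((volume.restrict (σ.tube 1)).prod ((volume.restrict Yc).prod (volume.restrict Yc))))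
    (Φ : TestFn (σ.tube 1)) :
    Filter.Tendsto
      (fun k => ∫ x in σ.tube 1,
        f k x * Φ.φ x ((ε (h k))⁻¹ • r x) (((ε (h k)) ^ 2)⁻¹ • r x))
      Filter.atTop
      (nhds (∫ x in σ.tube 1, ∫ y in Yc, ∫ w in Yc, F x y w * Φ.φ x y w)) ↔
    Filter.Tendsto
      (fun k => ∫ z in cylinder σ,
        (f k (Xi σ z)) *
          (Φ.φ (Xi σ z) ((ε (h k))⁻¹ • proj2 z) (((ε (h k)) ^ 2)⁻¹ • proj2 z) *
            Real.sqrt (((gradm (Xi σ) z)ᵀ * gradm (Xi σ) z).det)))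
      Filter.atTop
      (nhds (∫ z in cylinder σ, ∫ y in Yc, ∫ w in Yc,
        F (Xi σ z) y w *
          (Φ.φ (Xi σ z) y w * Real.sqrt (((gradm (Xi σ) z)ᵀ * gradm (Xi σ) z).det)))) :=
  stmt_7_general σ r hrΞ hΞ_bij h ε f F Φ
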